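/- arXiv:2012.15395 — 8 statements merged into one kernel-verified Lean document; each statement's English description precedes it below -/
import Mathlib

section
/- Every finitely presentable group admits a reduced finite presentation. Precisely: let S be a finite set, R a finite subset of the free group on S, and G = ⟨S ∣ R⟩. Then there exist a finite set S' and a finite subset R' of the free group on S' such that the presented group G' = ⟨S' ∣ R'⟩ (with quotient map φ' : FreeGroup S' → G') is isomorphic to G, φ'(s) ≠ 1 for every s ∈ S', and for every r ∈ R' and all 1 ≤ i ≤ j ≤ L(r), if φ'(r[i,j]) = 1 then i = 1 and j = L(r). -/
/-!
Two kinds of Tietze moves suffice. First, every generator that is trivial in `G` is deleted by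
sending it to `1` in the relators; the surviving generators are untouched, so they stay
nontrivial. Second, if a relator factors as `r = p * w * q` with `w` a trivial proper subword,
replace `r` by the two relators `w` and `p * q`: this keeps the normal closure, and since both new
relators are shorter than `r`, it decreases `∑ 3 ^ L(r)` because `2 * 3 ^ (n - 1) < 3 ^ n`. A
relator set minimising this weight within the normal closure therefore admits no such move.
-/

/-- The length `L(r)` of the reduced word of an element of a free group. -/
def wordLength {S : Type*} [DecidableEq S] (r : FreeGroup S) : ℕ :=
  (FreeGroup.toWord r).length

/-- The subword `r[i,j]` of `r`: the element of the free group given by the product of the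
`i`-th through `j`-th letters (1-indexed) of the reduced word of `r`. -/
def subword {S : Type*} [DecidableEq S] (r : FreeGroup S) (i j : ℕ) : FreeGroup S :=
  FreeGroup.mk (((FreeGroup.toWord r).drop (i - 1)).take (j - i + 1))

/-- The quotient map `φ : FreeGroup S → ⟨S ∣ R⟩`. -/
def presentMap {S : Type*} (R : Set (FreeGroup S)) : FreeGroup S →* PresentedGroup R :=
  PresentedGroup.mk R

open FreeGroup Subgroup

theorem Finset.sum_insert_le {ι M : Type*} [DecidableEq ι] [AddCommMonoid M] [PartialOrder M]
    [CanonicallyOrderedAdd M] (s : Finset ι) (a : ι) (f : ι → M) :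
    ∑ x ∈ insert a s, f x ≤ f a + ∑ x ∈ s, f x := by
  by_cases ha : a ∈ s
  · rw [Finset.insert_eq_of_mem ha]
    exact le_add_self
  · rw [Finset.sum_insert ha]

theorem normalClosure_split_relator {G : Type*} [Group G] {s : Set G} {p w q : G}
    (hr : p * w * q ∈ s) (hw : w ∈ normalClosure s) :
    normalClosure (insert w (insert (p * q) (s \ {p * w * q}))) = normalClosure s := by
  refine le_antisymm (normalClosure_le_normal ?_) (normalClosure_le_normal ?_)
  · have hpq : p * q = (p * w⁻¹ * p⁻¹) * (p * w * q) := by group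
    refine Set.insert_subset hw (Set.insert_subset ?_ (Set.sdiff_subset.trans subset_normalClosure))
    rw [hpq]
    exact mul_mem (normalClosure_normal.conj_mem _ (inv_mem hw) p) (subset_normalClosure hr)
  · intro x hx
    by_cases hxr : x = p * w * q
    · have hsplit : p * w * q = (p * w * p⁻¹) * (p * q) := by group
      rw [hxr, hsplit]
      exact mul_mem (normalClosure_normal.conj_mem _ (subset_normalClosure (by simp)) p)
        (subset_normalClosure (by simp))
    · exact subset_normalClosure (by simp [hx, hxr])

section Tietze

variable {α β : Type*} {R : Set (FreeGroup α)} {f : FreeGroup α →* FreeGroup β}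

theorem presentMap_eq_one_iff {x : FreeGroup α} : presentMap R x = 1 ↔ x ∈ normalClosure R :=
  PresentedGroup.mk_eq_one_iff

theorem ker_presentMap_image_comp (hf : Function.Surjective f) (hker : f.ker ≤ normalClosure R) :
    ((presentMap (f '' R)).comp f).ker = normalClosure R := by
  have hmk : (presentMap (f '' R)).ker = normalClosure (f '' R) := by
    ext x
    exact presentMap_eq_one_iff
  rw [← MonoidHom.comap_ker, hmk, ← map_normalClosure R f hf, comap_map_eq,
    sup_eq_left.mpr hker]

noncomputable def presentedGroupImageEquiv (hf : Function.Surjective f)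
    (hker : f.ker ≤ normalClosure R) : PresentedGroup (f '' R) ≃* PresentedGroup R :=
  ((QuotientGroup.quotientMulEquivOfEq (ker_presentMap_image_comp hf hker).symm).trans
    (QuotientGroup.quotientKerEquivOfSurjective _
      ((PresentedGroup.mk_surjective _).comp hf))).symm

theorem presentMap_image_apply_eq_one_iff (hf : Function.Surjective f)
    (hker : f.ker ≤ normalClosure R) (x : FreeGroup α) :
    presentMap (f '' R) (f x) = 1 ↔ presentMap R x = 1 := by
  rw [← MonoidHom.comp_apply, ← MonoidHom.mem_ker, ker_presentMap_image_comp hf hker,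
    presentMap_eq_one_iff]

end Tietze

section Subwords

variable {S : Type*} [DecidableEq S]

theorem wordLength_eq_norm (r : FreeGroup S) : wordLength r = r.norm := rfl

theorem norm_mk_of_isReduced {L : List (S × Bool)} (h : IsReduced L) :
    (mk L).norm = L.length := by
  rw [FreeGroup.norm, toWord_mk, h.reduce_eq]

theorem mk_take_mul_subword_mul_mk_drop (r : FreeGroup S) {i j : ℕ} (hi : 1 ≤ i)
    (hij : i ≤ j) :
    mk (r.toWord.take (i - 1)) * subword r i j * mk (r.toWord.drop j) = r := by
  have hdrop : r.toWord.drop j = (r.toWord.drop (i - 1)).drop (j - i + 1) := by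
    rw [List.drop_drop]
    congr 1
    omega
  rw [subword, mul_mk, mul_mk, List.append_assoc, hdrop, List.take_append_drop,
    List.take_append_drop, mk_toWord]

theorem norm_subword (r : FreeGroup S) {i j : ℕ} (hi : 1 ≤ i) (hij : i ≤ j)
    (hj : j ≤ wordLength r) :
    (subword r i j).norm = j - i + 1 := by
  have hinfix : (r.toWord.drop (i - 1)).take (j - i + 1) <:+: r.toWord :=
    (List.take_prefix _ _).isInfix.trans (List.drop_suffix _ _).isInfix
  rw [subword, norm_mk_of_isReduced (isReduced_toWord.infix hinfix), List.length_take,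
    List.length_drop]
  rw [wordLength] at hj
  omega

end Subwords

section Weight

variable {S : Type*} [DecidableEq S]

def relatorWeight (F : Finset (FreeGroup S)) : ℕ :=
  ∑ r ∈ F, 3 ^ r.norm

theorem relatorWeight_insert_insert_erase_lt {F : Finset (FreeGroup S)} {r a b : FreeGroup S}
    (hr : r ∈ F) (ha : a.norm < r.norm) (hb : b.norm < r.norm) :
    relatorWeight (insert a (insert b (F.erase r))) < relatorWeight F := by
  have hpow : 3 ^ a.norm + 3 ^ b.norm < 3 ^ r.norm := by
    have ha' := Nat.pow_le_pow_right (show 0 < 3 by norm_num) (Nat.le_sub_one_of_lt ha)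
    have hb' := Nat.pow_le_pow_right (show 0 < 3 by norm_num) (Nat.le_sub_one_of_lt hb)
    have h3 : 3 ^ r.norm = 3 * 3 ^ (r.norm - 1) := by
      rw [← pow_succ']
      congr 1
      omega
    have hpos : 0 < 3 ^ (r.norm - 1) := by positivity
    omega
  calc relatorWeight (insert a (insert b (F.erase r)))
      ≤ 3 ^ a.norm + (3 ^ b.norm + ∑ x ∈ F.erase r, 3 ^ x.norm) :=
        (Finset.sum_insert_le _ _ _).trans (Nat.add_le_add_left (Finset.sum_insert_le _ _ _) _)
    _ < 3 ^ r.norm + ∑ x ∈ F.erase r, 3 ^ x.norm := by omega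
    _ = relatorWeight F := Finset.add_sum_erase F (fun x => 3 ^ x.norm) hr

theorem exists_relatorWeight_lt_of_subword_mem {F : Finset (FreeGroup S)} {r : FreeGroup S}
    {i j : ℕ} (hr : r ∈ F) (hi : 1 ≤ i) (hij : i ≤ j) (hj : j ≤ wordLength r)
    (hproper : ¬(i = 1 ∧ j = wordLength r))
    (hw : subword r i j ∈ normalClosure (F : Set (FreeGroup S))) :
    ∃ F' : Finset (FreeGroup S), normalClosure (F' : Set (FreeGroup S)) = normalClosure ↑F ∧
      relatorWeight F' < relatorWeight F := by
  set p := mk (r.toWord.take (i - 1))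
  set w := subword r i j
  set q := mk (r.toWord.drop j)
  have hsplit : p * w * q = r := mk_take_mul_subword_mul_mk_drop r hi hij
  have hnw : w.norm = j - i + 1 := norm_subword r hi hij hj
  have hnp : p.norm ≤ i - 1 := norm_mk_le.trans (by simp)
  have hnq : q.norm ≤ r.norm - j := norm_mk_le.trans (by simp [FreeGroup.norm])
  rw [wordLength_eq_norm] at hj hproper
  refine ⟨insert w (insert (p * q) (F.erase r)), ?_,
    relatorWeight_insert_insert_erase_lt hr (by omega) ((norm_mul_le p q).trans_lt (by omega))⟩
  rw [← hsplit] at hr ⊢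
  push_cast
  exact normalClosure_split_relator hr hw

theorem exists_reduced_relators (F : Finset (FreeGroup S)) :
    ∃ F' : Finset (FreeGroup S), normalClosure (F' : Set (FreeGroup S)) = normalClosure ↑F ∧
      ∀ r ∈ F', ∀ i j : ℕ, 1 ≤ i → i ≤ j → j ≤ wordLength r →
        subword r i j ∈ normalClosure (F' : Set (FreeGroup S)) →
          i = 1 ∧ j = wordLength r := by
  obtain ⟨F', hF' : normalClosure _ = _, hmin⟩ := (measure relatorWeight).wf.has_min
    {F' : Finset (FreeGroup S) | normalClosure (F' : Set (FreeGroup S)) = normalClosure ↑F}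
    ⟨F, rfl⟩
  refine ⟨F', hF', fun r hr i j hi hij hj hw => by_contra fun hproper => ?_⟩
  obtain ⟨F'', hF'', hlt⟩ := exists_relatorWeight_lt_of_subword_mem hr hi hij hj hproper hw
  exact hmin F'' (hF''.trans hF') hlt

end Weight

section KillGenerators

variable {S : Type*} (R : Set (FreeGroup S))

abbrev NontrivialGenerators : Type _ := {s : S // presentMap R (of s) ≠ 1}

open Classical in
noncomputable def killTrivialGenerators : FreeGroup S →* FreeGroup (NontrivialGenerators R) :=
  FreeGroup.lift fun s => if h : presentMap R (of s) = 1 then 1 else of ⟨s, h⟩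

theorem killTrivialGenerators_of (t : NontrivialGenerators R) :
    killTrivialGenerators R (of t.1) = of t := by
  simp [killTrivialGenerators, t.2]

theorem killTrivialGenerators_comp_map_val :
    (killTrivialGenerators R).comp (FreeGroup.map Subtype.val) = MonoidHom.id _ :=
  FreeGroup.ext_hom _ _ fun t => by simp [killTrivialGenerators_of]

theorem killTrivialGenerators_surjective : Function.Surjective (killTrivialGenerators R) :=
  fun y => ⟨FreeGroup.map Subtype.val y,
    DFunLike.congr_fun (killTrivialGenerators_comp_map_val R) y⟩

theorem ker_killTrivialGenerators_le : (killTrivialGenerators R).ker ≤ normalClosure R := by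
  have hsection : (presentMap R).comp
      ((FreeGroup.map Subtype.val).comp (killTrivialGenerators R)) = presentMap R := by
    refine FreeGroup.ext_hom _ _ fun s => ?_
    by_cases hs : presentMap R (of s) = 1 <;> simp [killTrivialGenerators, hs]
  intro x hx
  rw [← presentMap_eq_one_iff, ← DFunLike.congr_fun hsection x]
  simp [(MonoidHom.mem_ker).mp hx]

end KillGenerators

/-- Every finitely presentable group admits a reduced finite presentation:
given a finite presentation `⟨S ∣ R⟩`, there is a finite presentation `⟨S' ∣ R'⟩` of an
isomorphic group such that no generator maps to the identity and for every relator `r` the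
only subword `r[i,j]` (with `1 ≤ i ≤ j ≤ L(r)`) mapping to the identity is `r` itself. -/
theorem exists_reduced_presentation (S : Type) [Finite S]
    (R : Set (FreeGroup S)) (hR : R.Finite) :
    ∃ (S' : Type) (_ : Finite S') (_ : DecidableEq S') (R' : Set (FreeGroup S')),
      R'.Finite ∧
      Nonempty (PresentedGroup R' ≃* PresentedGroup R) ∧
      (∀ s : S', presentMap R' (FreeGroup.of s) ≠ 1) ∧
      (∀ r ∈ R', ∀ i j : ℕ, 1 ≤ i → i ≤ j → j ≤ wordLength r →
        presentMap R' (subword r i j) = 1 → i = 1 ∧ j = wordLength r) := by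
  classical
  have hsurj := killTrivialGenerators_surjective R
  have hker := ker_killTrivialGenerators_le R
  have hR₁ : (killTrivialGenerators R '' R).Finite := hR.image _
  obtain ⟨F, hF, hreduced⟩ := exists_reduced_relators hR₁.toFinset
  rw [hR₁.coe_toFinset] at hF
  refine ⟨NontrivialGenerators R, inferInstance, inferInstance, F, F.finite_toSet,
    ⟨(QuotientGroup.quotientMulEquivOfEq hF).trans (presentedGroupImageEquiv hsurj hker)⟩,
    fun t ht => t.2 ?_, fun r hr i j hi hij hj hw =>
      hreduced r hr i j hi hij hj (presentMap_eq_one_iff.mp hw)⟩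
  rw [← presentMap_image_apply_eq_one_iff hsurj hker, killTrivialGenerators_of,
    presentMap_eq_one_iff, ← hF, ← presentMap_eq_one_iff]
  exact ht
end

section
/- Let X be a topological space that is path-connected, simply connected, and locally path-connected, and let a group G act on X by homeomorphisms such that every point x ∈ X has an open neighborhood U with (g • U) ∩ U = ∅ for every g ≠ 1 in G. Then for any x ∈ X, the fundamental group of the orbit space X/G (the quotient of X by the orbit equivalence relation, with the quotient topology) based at the class of x is isomorphic to G. -/
open Pointwise

theorem isQuotientCoveringMap_quotientMk_of_smul_disjoint {X G : Type*} [TopologicalSpace X]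
    [Group G] [MulAction G X] [ContinuousConstSMul G X]
    (hdisc : ∀ x : X, ∃ U : Set X, IsOpen U ∧ x ∈ U ∧ ∀ g : G, g ≠ 1 → (g • U) ∩ U = ∅) :
    IsQuotientCoveringMap (Quotient.mk (MulAction.orbitRel G X)) G where
  __ := isQuotientMap_quotient_mk'
  apply_eq_iff_mem_orbit := Quotient.eq''
  disjoint x := by
    obtain ⟨U, hU, hxU, hUdisj⟩ := hdisc x
    refine ⟨U, hU.mem_nhds hxU, fun g hg => ?_⟩
    by_contra hg1
    rw [Set.image_smul, hUdisj g hg1] at hg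
    exact Set.not_nonempty_empty hg

theorem fundamentalGroup_of_properlyDiscontinuous_quotient_general
    (X : Type*) [TopologicalSpace X] [SimplyConnectedSpace X]
    (G : Type*) [Group G] [MulAction G X]
    (hcont : ∀ g : G, Continuous fun x : X => g • x)
    (hdisc : ∀ x : X, ∃ U : Set X, IsOpen U ∧ x ∈ U ∧ ∀ g : G, g ≠ 1 → (g • U) ∩ U = ∅)
    (x : X) :
    Nonempty (FundamentalGroup (Quotient (MulAction.orbitRel G X))
      (Quotient.mk (MulAction.orbitRel G X) x) ≃* G) :=
  have : ContinuousConstSMul G X := ⟨hcont⟩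
  ⟨((isQuotientCoveringMap_quotientMk_of_smul_disjoint hdisc).fundamentalGroupEquiv
    ⟨x, rfl⟩).trans (MulEquiv.inv' G).symm⟩

/-- If a group `G` acts by homeomorphisms on a path-connected, simply
connected, locally path-connected space `X`, and the action is properly discontinuous
(every point has an open neighborhood `U` with `g • U ∩ U = ∅` for all `g ≠ 1`), then the
fundamental group of the orbit space `X/G` is isomorphic to `G`. -/
theorem fundamentalGroup_of_properlyDiscontinuous_quotient
    (X : Type*) [TopologicalSpace X] [PathConnectedSpace X] [SimplyConnectedSpace X]
    [LocallyPathConnectedSpace X]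
    (G : Type*) [Group G] [MulAction G X]
    (hcont : ∀ g : G, Continuous fun x : X => g • x)
    (hdisc : ∀ x : X, ∃ U : Set X, IsOpen U ∧ x ∈ U ∧ ∀ g : G, g ≠ 1 → (g • U) ∩ U = ∅)
    (x : X) :
    Nonempty (FundamentalGroup (Quotient (MulAction.orbitRel G X))
      (Quotient.mk (MulAction.orbitRel G X) x) ≃* G) :=
  fundamentalGroup_of_properlyDiscontinuous_quotient_general X G hcont hdisc x
end

section
/- Let P be a partial order on which a group G acts by order isomorphisms (g • · is monotone with monotone inverse for each g), and let d : P → ℕ satisfy d(p) < d(q) whenever p < q. Suppose g ∈ G is such that g • p ≠ p for all p ∈ P and d(g • p) = d(p) for all p ∈ P. Then for every nonempty chain σ ⊆ P there is no chain α ⊆ P containing both σ and g • σ = {g • p : p ∈ σ} as subsets. -/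
open Pointwise

theorem StrictMono.injOn_of_isChain {α β : Type*} [PartialOrder α] [Preorder β] {f : α → β}
    (hf : StrictMono f) {s : Set α} (hs : IsChain (· ≤ ·) s) : s.InjOn f := by
  intro a ha b hb hab
  by_contra hne
  rcases hs ha hb hne with h | h
  · exact (hf (h.lt_of_ne hne)).ne hab
  · exact (hf (h.lt_of_ne' hne)).ne' hab

theorem no_chain_containing_chain_and_translate_general
    (P : Type*) [PartialOrder P] (G : Type*) [Group G] [MulAction G P]
    (d : P → ℕ) (hd : ∀ p q : P, p < q → d p < d q)
    (g : G) (hfix : ∀ p : P, g • p ≠ p) (hdim : ∀ p : P, d (g • p) = d p)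
    (σ : Set P) (hne : σ.Nonempty) :
    ¬ ∃ α : Set P, IsChain (· ≤ ·) α ∧ σ ⊆ α ∧ g • σ ⊆ α := by
  rintro ⟨α, hα, hσα, hgσα⟩
  obtain ⟨p, hp⟩ := hne
  have hd_strictMono : StrictMono d := fun p q => hd p q
  exact hfix p <| hd_strictMono.injOn_of_isChain hα (hgσα (Set.smul_mem_smul_set hp))
    (hσα hp) (hdim p)

/-- Let a group `G` act on a partial order `P` by order isomorphisms, and
let `d : P → ℕ` be strictly monotone. If `g ∈ G` has no fixed point on `P` and preserves
`d`, then for every nonempty chain `σ ⊆ P` there is no chain `α` containing both `σ` and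
`g • σ`. -/
theorem no_chain_containing_chain_and_translate
    (P : Type*) [PartialOrder P] (G : Type*) [Group G] [MulAction G P]
    (hmono : ∀ (g : G) (p q : P), p ≤ q ↔ g • p ≤ g • q)
    (d : P → ℕ) (hd : ∀ p q : P, p < q → d p < d q)
    (g : G) (hfix : ∀ p : P, g • p ≠ p) (hdim : ∀ p : P, d (g • p) = d p)
    (σ : Set P) (hne : σ.Nonempty) (hσ : IsChain (· ≤ ·) σ) :
    ¬ ∃ α : Set P, IsChain (· ≤ ·) α ∧ σ ⊆ α ∧ g • σ ⊆ α :=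
  no_chain_containing_chain_and_translate_general P G d hd g hfix hdim σ hne
end

section
/- Every finite topological space is locally path-connected. -/
/-- Every finite topological space is locally path-connected. -/
theorem finite_space_locPathConnected (X : Type*) [Finite X] [TopologicalSpace X] :
    LocPathConnectedSpace X :=
  AlexandrovDiscrete.locallyPathConnectedSpace
end

section
/- A finite topological space is connected if and only if it is path-connected. -/
/-- A finite topological space is connected if and only if it is
path-connected. -/
theorem finite_space_connected_iff_pathConnected (X : Type*) [Finite X]
    [TopologicalSpace X] :
    ConnectedSpace X ↔ PathConnectedSpace X :=
  -- A finite space is Alexandrov-discrete, hence locally path-connected.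
  pathConnectedSpace_iff_connectedSpace.symm
end

section
/- Let X be a finite topological space and x ∈ X, and let U_x denote the intersection of all open sets containing x (which is open, being a finite intersection). Then U_x, with the subspace topology, is a contractible topological space. -/
/-! Every point `y` of `U_x` specializes to `x` (each open set containing `x` contains `y`),
so an open subset of `U_x` containing `x` is all of `U_x`. Hence the homotopy that is the
identity for `t < 1` and jumps to the constant map `x` at `t = 1` is continuous. -/

open Set Topology

theorem contractibleSpace_of_forall_specializes {Y : Type*} [TopologicalSpace Y] (y₀ : Y)
    (h : ∀ y, y ⤳ y₀) : ContractibleSpace Y := by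
  have eq_univ : ∀ U : Set Y, IsOpen U → y₀ ∈ U → U = univ := fun U hU hy₀ ↦
    eq_univ_of_forall fun y ↦ (h y).mem_open hU hy₀
  rw [contractible_iff_id_nullhomotopic]
  refine ⟨y₀, ⟨{
    toFun := fun p ↦ if p.1 = 1 then y₀ else p.2
    continuous_toFun := continuous_def.2 fun U hU ↦ ?_
    map_zero_left := fun y ↦ by simp
    map_one_left := fun y ↦ by simp }⟩⟩
  by_cases hy₀ : y₀ ∈ U
  · simp [eq_univ U hU hy₀]
  · have hpre : (fun p : unitInterval × Y ↦ if p.1 = 1 then y₀ else p.2) ⁻¹' U =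
        {1}ᶜ ×ˢ U := by
      ext ⟨t, y⟩
      by_cases ht : t = 1 <;> simp [ht, hy₀]
    rw [hpre]
    exact isOpen_compl_singleton.prod hU

theorem contractibleSpace_nhdsKer_singleton {X : Type*} [TopologicalSpace X] (x : X) :
    ContractibleSpace (nhdsKer {x}) :=
  contractibleSpace_of_forall_specializes ⟨x, subset_nhdsKer rfl⟩ fun y ↦
    (subtype_specializes_iff _ _).2 (mem_nhdsKer_singleton.1 y.2)

theorem minimal_open_set_contractible_general (X : Type*) [TopologicalSpace X] (x : X) :
    ContractibleSpace (⋂₀ {U : Set X | IsOpen U ∧ x ∈ U} : Set X) := by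
  have hUx : ⋂₀ {U : Set X | IsOpen U ∧ x ∈ U} = nhdsKer {x} := by
    simp only [nhdsKer_def, singleton_subset_iff]
  rw [hUx]
  exact contractibleSpace_nhdsKer_singleton x

/-- In a finite topological space, the minimal open set `U_x` containing a
point `x` (the intersection of all open sets containing `x`), with the subspace topology,
is contractible. -/
theorem minimal_open_set_contractible (X : Type*) [Finite X] [TopologicalSpace X] (x : X) :
    ContractibleSpace (⋂₀ {U : Set X | IsOpen U ∧ x ∈ U} : Set X) :=
  minimal_open_set_contractible_general X x
end

section
/- The space Σ_n is path-connected. -/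
/-- The underlying set of the finite space `Σ_n`: points `a i` (`i` mod `n`),
`a' j`, `b' j` (`j` mod `2n`), and `b i j`, `c i j` (`i` mod `n`, `j` mod `2n`). -/
inductive SigmaSpace (n : ℕ) : Type
  | a (i : ZMod n)
  | a' (j : ZMod (2 * n))
  | b' (j : ZMod (2 * n))
  | b (i : ZMod n) (j : ZMod (2 * n))
  | c (i : ZMod n) (j : ZMod (2 * n))

namespace SigmaSpace

/-- The generating basic open set `U_x` at each point `x` of `Σ_n`. -/
def U {n : ℕ} : SigmaSpace n → Set (SigmaSpace n)
  | c i j => {c i j}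
  | b i j => {c i (j - 1), b i j, c i j}
  | b' j => insert (b' j) {x | ∃ i, x = c i j}
  | a i => insert (a i) ({x | ∃ j, x = b i j} ∪ {x | ∃ j, x = c i j})
  | a' j => {a' j, b' (j - 1), b' j} ∪ {x | ∃ i, x = b i j ∨ x = c i (j - 1) ∨ x = c i j}

/-- `Σ_n` carries the topology generated by the sets `U_x`. -/
instance (n : ℕ) : TopologicalSpace (SigmaSpace n) :=
  TopologicalSpace.generateFrom (Set.range U)

end SigmaSpace

/-!
Every point `x` of `Σ_n` is a specialization of some `c i j` (every basic open set containing
`x` contains `c i j`), and in any topological space a point is joined by a path to each of its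
specializations. The `c`-points are chained together: `b' j` links `c i j` to `c 0 j`, and
`b 0 j` links `c 0 (j - 1)` to `c 0 j`, so stepping through `j` reaches `c 0 0`.
-/

open TopologicalSpace

theorem specializes_generateFrom_iff {α : Type*} {g : Set (Set α)} {x y : α} :
    @Specializes α (generateFrom g) x y ↔ ∀ s ∈ g, y ∈ s → x ∈ s := by
  let _ := generateFrom g
  simp only [specializes_iff_pure, nhds_generateFrom, le_iInf_iff, Filter.le_principal_iff,
    Filter.mem_pure, Set.mem_ofPred_eq, and_imp]
  exact ⟨fun h s hs hy => h s hy hs, fun h s hy hs => h s hs hy⟩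

theorem Specializes.joined {X : Type*} [TopologicalSpace X] {x y : X} (h : x ⤳ y) :
    Joined x y :=
  (h.joinedIn (Set.mem_univ x) (Set.mem_univ y)).joined

namespace SigmaSpace

variable {n : ℕ}

theorem specializes_iff {x y : SigmaSpace n} : x ⤳ y ↔ ∀ p, y ∈ U p → x ∈ U p := by
  simpa using specializes_generateFrom_iff (g := Set.range (U (n := n))) (x := x) (y := y)

theorem c_specializes_b (i : ZMod n) (j : ZMod (2 * n)) : c i j ⤳ b i j := by
  rw [specializes_iff]
  rintro (_ | _ | _ | _ | _) <;> simp_all [U, exists_or]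

theorem c_sub_one_specializes_b (i : ZMod n) (j : ZMod (2 * n)) : c i (j - 1) ⤳ b i j := by
  rw [specializes_iff]
  rintro (_ | _ | _ | _ | _) <;> simp_all [U, exists_or]

theorem c_specializes_b' (i : ZMod n) (j : ZMod (2 * n)) : c i j ⤳ b' j := by
  rw [specializes_iff]
  rintro (_ | _ | _ | _ | _) <;> simp_all [U, exists_or]

theorem c_specializes_a (i : ZMod n) (j : ZMod (2 * n)) : c i j ⤳ a i := by
  rw [specializes_iff]
  rintro (_ | _ | _ | _ | _) <;> simp_all [U, exists_or]

theorem c_specializes_a' (i : ZMod n) (j : ZMod (2 * n)) : c i j ⤳ a' j := by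
  rw [specializes_iff]
  rintro (_ | _ | _ | _ | _) <;> simp_all [U, exists_or]

theorem joined_c_c_zero (i : ZMod n) (j : ZMod (2 * n)) : Joined (c i j) (c 0 j) :=
  (c_specializes_b' i j).joined.trans (c_specializes_b' 0 j).joined.symm

theorem joined_c_sub_one (i : ZMod n) (j : ZMod (2 * n)) : Joined (c i (j - 1)) (c i j) :=
  (c_sub_one_specializes_b i j).joined.trans (c_specializes_b i j).joined.symm

theorem joined_c_zero_intCast (k : ℤ) : Joined (c 0 (k : ZMod (2 * n))) (c 0 0) := by
  induction k using Int.induction_on with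
  | zero => simpa using Joined.refl _
  | succ k ih =>
    refine Joined.trans ?_ ih
    simpa using (joined_c_sub_one 0 ((k + 1 : ℤ) : ZMod (2 * n))).symm
  | pred k ih =>
    refine Joined.trans ?_ ih
    simpa using joined_c_sub_one 0 ((-k : ℤ) : ZMod (2 * n))

theorem joined_c_c_zero_zero (i : ZMod n) (j : ZMod (2 * n)) : Joined (c i j) (c 0 0) := by
  obtain ⟨k, rfl⟩ := ZMod.intCast_surjective j
  exact (joined_c_c_zero i k).trans (joined_c_zero_intCast k)

theorem joined_c_zero_zero : ∀ x : SigmaSpace n, Joined x (c 0 0)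
  | a i => (c_specializes_a i 0).joined.symm.trans (joined_c_c_zero_zero i 0)
  | a' j => (c_specializes_a' 0 j).joined.symm.trans (joined_c_c_zero_zero 0 j)
  | b' j => (c_specializes_b' 0 j).joined.symm.trans (joined_c_c_zero_zero 0 j)
  | b i j => (c_specializes_b i j).joined.symm.trans (joined_c_c_zero_zero i j)
  | c i j => joined_c_c_zero_zero i j

end SigmaSpace

theorem sigmaSpace_pathConnected_general (n : ℕ) :
    PathConnectedSpace (SigmaSpace n) :=
  ⟨⟨.c 0 0⟩, fun x y =>
    (SigmaSpace.joined_c_zero_zero x).trans (SigmaSpace.joined_c_zero_zero y).symm⟩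

/-- The space `Σ_n` is path-connected. -/
theorem sigmaSpace_pathConnected (n : ℕ) (hn : 2 ≤ n) :
    PathConnectedSpace (SigmaSpace n) :=
  sigmaSpace_pathConnected_general n
end

section
/- The map g : Σ_n → Σ_n defined by g(a_i) = a_{i+1}, g(a'_j) = a'_{j+2}, g(b'_j) = b'_{j+2}, g(b_{i,j}) = b_{i+1,j+2}, g(c_{i,j}) = c_{i+1,j+2} (first indices mod n, second indices mod 2n) is a homeomorphism of Σ_n satisfying gⁿ = id, and the resulting action of ℤ/nℤ on Σ_n is properly discontinuous in the strong sense: for every x ∈ Σ_n and every k with 1 ≤ k ≤ n−1, g^k(U_x) ∩ U_x = ∅, where U_x is the generating basic open set at x. -/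
namespace SigmaSpace

/-- The rotation map `g : Σ_n → Σ_n`. -/
def rot {n : ℕ} : SigmaSpace n → SigmaSpace n
  | a i => a (i + 1)
  | a' j => a' (j + 2)
  | b' j => b' (j + 2)
  | b i j => b (i + 1) (j + 2)
  | c i j => c (i + 1) (j + 2)

end SigmaSpace

/-!
`rot` is the translation by `(1, 2)` of the indices `(i, j) ∈ ℤ/n × ℤ/2n`. Every translation
maps each generating set `U x` onto `U` of the translated point, so it is a homeomorphism, and
`rot^[k]` is the translation by `(k, 2k)`, the identity for `k = n`. For `0 < k < n` the sets `U x`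
and `rot^[k] '' U x` are disjoint: the points of `U x` all carry the first index of `x` when `x` is
some `a i`, `b i j` or `c i j`, and otherwise have second index `j` (for `x = b' j`) or in
`{j - 1, j}` (for `x = a' j`), while `rot^[k]` moves first indices by `k ≠ 0` and second indices by
`2k ∉ {-1, 0, 1}`.
-/

theorem Equiv.isHomeomorph_of_image_generators {X Y ι κ : Type*} [tX : TopologicalSpace X]
    [tY : TopologicalSpace Y] {B : ι → Set X} {C : κ → Set Y}
    (hX : tX = .generateFrom (Set.range B)) (hY : tY = .generateFrom (Set.range C))
    (e : X ≃ Y) (σ : ι ≃ κ) (h : ∀ i, e '' B i = C (σ i)) : IsHomeomorph e := by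
  rw [e.isHomeomorph_iff]
  constructor
  · rw [hY, continuous_generateFrom_iff]
    rintro _ ⟨k, rfl⟩
    rw [← σ.apply_symm_apply k, ← h, e.preimage_image]
    exact hX ▸ TopologicalSpace.isOpen_generateFrom_of_mem ⟨_, rfl⟩
  · rw [hX, continuous_generateFrom_iff]
    rintro _ ⟨i, rfl⟩
    rw [← e.image_eq_preimage_symm, h]
    exact hY ▸ TopologicalSpace.isOpen_generateFrom_of_mem ⟨_, rfl⟩

theorem ZMod.natCast_ne_zero_of_lt {N m : ℕ} (h0 : 0 < m) (h : m < N) : (m : ZMod N) ≠ 0 := by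
  rw [Ne, ZMod.natCast_eq_zero_iff]
  exact Nat.not_dvd_of_pos_of_lt h0 h

namespace SigmaSpace

variable {n : ℕ}

def shift (p : ZMod n) (q : ZMod (2 * n)) : SigmaSpace n → SigmaSpace n
  | a i => a (i + p)
  | a' j => a' (j + q)
  | b' j => b' (j + q)
  | b i j => b (i + p) (j + q)
  | c i j => c (i + p) (j + q)

theorem shift_shift (p p' : ZMod n) (q q' : ZMod (2 * n)) (x : SigmaSpace n) :
    shift p q (shift p' q' x) = shift (p' + p) (q' + q) x := by
  cases x <;> simp only [shift, add_assoc]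

theorem shift_zero (x : SigmaSpace n) : shift 0 0 x = x := by
  cases x <;> simp only [shift, add_zero]

def shiftEquiv (p : ZMod n) (q : ZMod (2 * n)) : SigmaSpace n ≃ SigmaSpace n where
  toFun := shift p q
  invFun := shift (-p) (-q)
  left_inv x := by simp only [shift_shift, add_neg_cancel, shift_zero]
  right_inv x := by simp only [shift_shift, neg_add_cancel, shift_zero]

theorem shift_mem_U_shift {p : ZMod n} {q : ZMod (2 * n)} {x y : SigmaSpace n} :
    shift p q y ∈ U (shift p q x) ↔ y ∈ U x := by
  cases x <;> cases y <;> simp [U, shift, add_sub_right_comm, ← and_or_left]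

theorem shift_image_U (p : ZMod n) (q : ZMod (2 * n)) (x : SigmaSpace n) :
    shift p q '' U x = U (shift p q x) := by
  ext z
  obtain ⟨y, rfl⟩ := (shiftEquiv p q).surjective z
  exact (shiftEquiv p q).injective.mem_set_image.trans shift_mem_U_shift.symm

theorem rot_eq_shift : (rot : SigmaSpace n → SigmaSpace n) = shift 1 2 := by
  funext x
  cases x <;> rfl

theorem rot_iterate (k : ℕ) :
    (rot : SigmaSpace n → SigmaSpace n)^[k] = shift k ((2 * k : ℕ) : ZMod (2 * n)) := by
  induction k with
  | zero => funext x; simpa using (shift_zero x).symm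
  | succ k ih =>
    funext x
    rw [Function.iterate_succ_apply', ih, rot_eq_shift, shift_shift]
    push_cast
    ring_nf

theorem isHomeomorph_shift (p : ZMod n) (q : ZMod (2 * n)) : IsHomeomorph (shift p q) :=
  (shiftEquiv p q).isHomeomorph_of_image_generators rfl rfl (shiftEquiv p q) (shift_image_U p q)

theorem disjoint_U_shift {p : ZMod n} {q : ZMod (2 * n)} (hp : p ≠ 0) (hq₀ : q ≠ 0)
    (hq₁ : q ≠ 1) (hq₂ : q ≠ -1) (x : SigmaSpace n) : Disjoint (U (shift p q x)) (U x) := by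
  refine Set.disjoint_left.2 fun z h1 h2 => ?_
  cases x <;> cases z <;> simp [U, shift] at h1 h2 <;> grind

end SigmaSpace

theorem sigmaSpace_rot_homeomorph_properlyDiscontinuous_general (n : ℕ) :
    IsHomeomorph (SigmaSpace.rot : SigmaSpace n → SigmaSpace n) ∧
    (SigmaSpace.rot)^[n] = (id : SigmaSpace n → SigmaSpace n) ∧
    ∀ (x : SigmaSpace n) (k : ℕ), 1 ≤ k → k ≤ n - 1 →
      (SigmaSpace.rot)^[k] '' SigmaSpace.U x ∩ SigmaSpace.U x = ∅ := by
  refine ⟨SigmaSpace.rot_eq_shift ▸ SigmaSpace.isHomeomorph_shift 1 2, ?_, fun x k hk₁ hk₂ => ?_⟩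
  · funext x
    rw [SigmaSpace.rot_iterate, ZMod.natCast_self, ZMod.natCast_self, SigmaSpace.shift_zero, id]
  · set q : ZMod (2 * n) := ((2 * k : ℕ) : ZMod (2 * n))
    have hq₁ : q ≠ 1 := by
      rw [← Nat.cast_one, Ne, ZMod.natCast_eq_natCast_iff', Nat.mod_eq_of_lt, Nat.mod_eq_of_lt] <;>
        omega
    have hq₂ : q ≠ -1 := by
      rw [Ne, eq_neg_iff_add_eq_zero, ← Nat.cast_succ]
      exact ZMod.natCast_ne_zero_of_lt (by omega) (by omega)
    rw [SigmaSpace.rot_iterate, SigmaSpace.shift_image_U, ← Set.disjoint_iff_inter_eq_empty]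
    exact SigmaSpace.disjoint_U_shift (ZMod.natCast_ne_zero_of_lt (by omega) (by omega))
      (ZMod.natCast_ne_zero_of_lt (by omega) (by omega)) hq₁ hq₂ x

/-- The map `g` is a homeomorphism of `Σ_n` with `gⁿ = id`, and the
induced `ℤ/nℤ`-action is properly discontinuous in the strong sense that
`g^k(U_x) ∩ U_x = ∅` for every point `x` and every `1 ≤ k ≤ n - 1`. -/
theorem sigmaSpace_rot_homeomorph_properlyDiscontinuous (n : ℕ) (hn : 2 ≤ n) :
    IsHomeomorph (SigmaSpace.rot : SigmaSpace n → SigmaSpace n) ∧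
    (SigmaSpace.rot)^[n] = (id : SigmaSpace n → SigmaSpace n) ∧
    ∀ (x : SigmaSpace n) (k : ℕ), 1 ≤ k → k ≤ n - 1 →
      (SigmaSpace.rot)^[k] '' SigmaSpace.U x ∩ SigmaSpace.U x = ∅ :=
  sigmaSpace_rot_homeomorph_properlyDiscontinuous_general n
end
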